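/- arXiv:1506.07645 — 2 statements merged into one kernel-verified Lean document; each statement's English description precedes it below -/
import Mathlib

section
/- For every integer n with 1 ≤ n ≤ N_L, the two net-rate curves for pilot lengths 2n−1 and 2n+1 intersect at N_coh = Δ_n; that is, (1 − (2n−1)/Δ_n)·C*_sum(2n−1) = (1 − (2n+1)/Δ_n)·C*_sum(2n+1), where C*_sum(N) = max_{p ∈ Ω(N)} C_sum(p). -/
/-- A pilot assignment vector `p = (p_0, …, p_{m-1})` is valid if `0 ≤ p_i ≤ 3^i`
for every `i` and `Σ_i p_i · 3^{-i} = 1`. -/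
def validP {m : ℕ} (p : Fin m → ℤ) : Prop :=
  (∀ i, 0 ≤ p i ∧ p i ≤ 3 ^ (i : ℕ)) ∧
  (∑ i, (p i : ℝ) / 3 ^ (i : ℕ)) = 1

/-- The pilot length `N_pil(p) = Σ_i p_i`. -/
def Npil {m : ℕ} (p : Fin m → ℤ) : ℤ := ∑ i, p i

/-- The per-cell sum rate `C_sum(p) = Σ_i 3^{-i}·p_i·C_i` with `C_i = C_0 + i·d`. -/
noncomputable def Csum {m : ℕ} (C0 d : ℝ) (p : Fin m → ℤ) : ℝ :=
  ∑ i, (p i : ℝ) / 3 ^ (i : ℕ) * (C0 + (i : ℕ) * d)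

/-- `χ(N_p0) = min{k ∈ ℕ : Σ_{i=0}^{k} 3^i > (N_p0 - 1)/2}`. -/
noncomputable def chiN (N : ℤ) : ℕ :=
  sInf {k : ℕ | (N - 1) / 2 < ∑ i ∈ Finset.range (k + 1), (3 : ℤ) ^ i}

/-- The closed-form optimal pilot assignment vector of Theorem 1:
`p'_i = Σ_{s=0}^{i} 3^s - (N-1)/2` if `i = χ(N)`,
`p'_i = 3·((N-1)/2 - Σ_{s=0}^{i-2} 3^s)` if `i = χ(N) + 1 ≤ m-1`,
and `p'_i = 0` otherwise. -/
noncomputable def popt (m : ℕ) (N : ℤ) : Fin m → ℤ := fun i =>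
  if (i : ℕ) = chiN N then (∑ s ∈ Finset.range (chiN N + 1), 3 ^ s) - (N - 1) / 2
  else if (i : ℕ) = chiN N + 1 then
    3 * ((N - 1) / 2 - ∑ s ∈ Finset.range (chiN N), 3 ^ s)
  else 0

/-- The intersection point `Δ_n = 2·(2n - 1 - Σ_{i=0}^{χ(2n-1)-1} 3^i + ξ(n)) + 1`,
where `ξ(n) = 3^{χ(2n-1)}·C_{χ(2n-1)}/d` and `C_i = C_0 + i·d`. -/
noncomputable def Delta (C0 d : ℝ) (n : ℕ) : ℝ :=
  2 * ((2 * (n : ℝ) - 1) - (∑ i ∈ Finset.range (chiN (2 * (n : ℤ) - 1)), (3 : ℝ) ^ i) +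
    3 ^ chiN (2 * (n : ℤ) - 1) * (C0 + (chiN (2 * (n : ℤ) - 1) : ℝ) * d) / d) + 1

/-! ### Auxiliary lemmas for the proof -/

lemma two_mul_add_one_le_pow' (j : ℕ) : 2 * j + 1 ≤ 3 ^ j := by
  induction j with
  | zero => norm_num
  | succ n ih =>
    have h : 1 ≤ 3 ^ n := Nat.one_le_pow _ _ (by norm_num)
    calc 2 * (n+1) + 1 = (2*n+1) + 2 := by ring
    _ ≤ 3^n + 2 := by omega
    _ ≤ 3^(n+1) := by rw [pow_succ]; omega

lemma lin_bound' (k i : ℕ) : (i : ℝ) ≤ (k : ℝ) - 1/2 + 3 ^ i / (2 * 3 ^ k) := by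
  rcases le_or_gt i k with h | h
  · rcases eq_or_lt_of_le h with rfl | h
    · have : (3:ℝ)^i / (2 * 3^i) = 1/2 := by
        rw [div_eq_iff (by positivity)]; ring
      rw [this]; linarith
    · have h1 : (0:ℝ) < 3 ^ i / (2 * 3 ^ k) := by positivity
      have h2 : (i:ℝ) + 1 ≤ (k:ℝ) := by exact_mod_cast h
      linarith
  · obtain ⟨j, rfl⟩ : ∃ j, i = k + j := ⟨i - k, by omega⟩
    have hj : 2 * (j:ℝ) + 1 ≤ 3 ^ j := by exact_mod_cast two_mul_add_one_le_pow' j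
    have : (3:ℝ) ^ (k + j) / (2 * 3 ^ k) = 3 ^ j / 2 := by
      rw [pow_add]; field_simp
    rw [this]; push_cast; linarith

/-- LP-style upper bound on the sum rate, for every level `k`. -/
lemma csum_le {m : ℕ} (C0 d : ℝ) (hd : 0 < d) (p : Fin m → ℤ) (hp : validP p)
    (N : ℤ) (hN : Npil p = N) (k : ℕ) :
    Csum C0 d p ≤ C0 + d * ((k : ℝ) - 1/2 + (N : ℝ) / (2 * 3 ^ k)) := by
  have hsum1 : (∑ i, (p i : ℝ) / 3 ^ (i : ℕ)) = 1 := hp.2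
  have hsumN : (∑ i : Fin m, (p i : ℝ)) = (N : ℝ) := by
    rw [← hN]; unfold Npil; push_cast; rfl
  have step : Csum C0 d p ≤
      ∑ i : Fin m, ((p i : ℝ) / 3 ^ (i : ℕ) * (C0 + d * ((k:ℝ) - 1/2)) +
        (p i : ℝ) * (d / (2 * 3 ^ k))) := by
    unfold Csum
    apply Finset.sum_le_sum
    intro i _
    have h0 : (0:ℝ) ≤ (p i : ℝ) / 3 ^ (i : ℕ) := by
      apply div_nonneg _ (by positivity)
      exact_mod_cast (hp.1 i).1
    have hi := lin_bound' k (i : ℕ)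
    have h1 : (p i : ℝ) / 3 ^ (i : ℕ) * (C0 + (i:ℕ) * d) ≤
        (p i : ℝ) / 3 ^ (i : ℕ) * (C0 + d * ((k:ℝ) - 1/2 + 3 ^ (i:ℕ) / (2 * 3 ^ k))) := by
      apply mul_le_mul_of_nonneg_left _ h0
      nlinarith
    refine h1.trans_eq ?_
    have h3 : (3:ℝ) ^ (i:ℕ) ≠ 0 := by positivity
    field_simp
    ring
  refine step.trans_eq ?_
  rw [Finset.sum_add_distrib, ← Finset.sum_mul, ← Finset.sum_mul, hsum1, hsumN]
  ring

lemma sum_two_support {α : Type*} [AddCommMonoid α] (m k : ℕ) (hk : k + 1 < m)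
    (F : ℕ → α) (hF : ∀ i, i ≠ k → i ≠ k + 1 → F i = 0) :
    ∑ i : Fin m, F (i : ℕ) = F k + F (k + 1) := by
  rw [Fin.sum_univ_eq_sum_range]
  have h1 : ({k, k+1} : Finset ℕ) ⊆ Finset.range m := by
    intro x hx; simp only [Finset.mem_insert, Finset.mem_singleton] at hx
    rw [Finset.mem_range]; omega
  rw [← Finset.sum_subset h1 (by
    intro x _ hx'
    simp only [Finset.mem_insert, Finset.mem_singleton, not_or] at hx'
    exact hF x hx'.1 hx'.2)]
  rw [Finset.sum_pair (by omega)]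

/-- An explicit pilot vector of pilot length `2M+1` supported on levels `k, k+1`. -/
def pg (m k : ℕ) (M : ℤ) : Fin m → ℤ := fun i =>
  if (i : ℕ) = k then (∑ s ∈ Finset.range (k + 1), 3 ^ s) - M
  else if (i : ℕ) = k + 1 then 3 * (M - ∑ s ∈ Finset.range k, 3 ^ s)
  else 0

lemma pg_spec (m k : ℕ) (hk : k + 1 < m) (M : ℤ)
    (hM1 : (∑ s ∈ Finset.range k, (3:ℤ) ^ s) ≤ M)
    (hM2 : M ≤ ∑ s ∈ Finset.range (k + 1), (3:ℤ) ^ s)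
    (C0 d : ℝ) :
    validP (pg m k M) ∧ Npil (pg m k M) = 2 * M + 1 ∧
      Csum C0 d (pg m k M) = C0 + d * ((k : ℝ) - 1/2 + (2 * (M:ℝ) + 1) / (2 * 3 ^ k)) := by
  set A : ℤ := ∑ s ∈ Finset.range (k + 1), (3:ℤ) ^ s with hA
  set B : ℤ := ∑ s ∈ Finset.range k, (3:ℤ) ^ s with hB
  have hAB : A = B + 3 ^ k := by rw [hA, hB, Finset.sum_range_succ]
  have hgeo : 2 * B = 3 ^ k - 1 := by
    have := geom_sum_mul (3:ℤ) k
    rw [← hB] at this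
    linarith [this]
  have h3k : (0:ℝ) < (3:ℝ) ^ k := by positivity
  have hBr : ((B:ℝ)) = ((3:ℝ) ^ k - 1) / 2 := by
    have h : ((2 * B : ℤ) : ℝ) = (((3:ℤ) ^ k - 1 : ℤ) : ℝ) := by rw [hgeo]
    push_cast at h; linarith
  have hAr : ((A:ℝ)) = (3 * (3:ℝ) ^ k - 1) / 2 := by
    have h : ((A : ℤ) : ℝ) = ((B + (3:ℤ) ^ k : ℤ) : ℝ) := by rw [← hAB]
    push_cast at h; linarith [hBr]
  have key : ∀ g : ℕ → ℝ, ∑ i : Fin m, (pg m k M i : ℝ) * g (i : ℕ) =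
      ((A - M : ℤ) : ℝ) * g k + ((3 * (M - B) : ℤ) : ℝ) * g (k + 1) := by
    intro g
    have step : ∑ i : Fin m, (pg m k M i : ℝ) * g (i : ℕ) =
        ∑ i : Fin m, (fun j => ((if j = k then A - M else if j = k + 1 then 3 * (M - B)
          else 0 : ℤ) : ℝ) * g j) (i : ℕ) :=
      Finset.sum_congr rfl (fun i _ => rfl)
    rw [step]
    refine (sum_two_support (α := ℝ) m k hk
      (fun j => ((if j = k then A - M else if j = k + 1 then 3 * (M - B) else 0 : ℤ) : ℝ) * g j)
      ?_).trans ?_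
    · intro i h1 h2; simp [h1, h2]
    · simp
  have keyZ : Npil (pg m k M) = (A - M) + 3 * (M - B) := by
    unfold Npil
    have step : ∑ i : Fin m, pg m k M i =
        ∑ i : Fin m, (fun j => (if j = k then A - M else if j = k + 1 then 3 * (M - B)
          else 0 : ℤ)) (i : ℕ) :=
      Finset.sum_congr rfl (fun i _ => rfl)
    rw [step]
    refine (sum_two_support (α := ℤ) m k hk
      (fun j => (if j = k then A - M else if j = k + 1 then 3 * (M - B) else 0 : ℤ))
      ?_).trans ?_
    · intro i h1 h2; simp [h1, h2]
    · simp
  refine ⟨⟨?_, ?_⟩, ?_, ?_⟩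
  · intro i
    unfold pg
    rcases eq_or_ne (i:ℕ) k with h | h
    · rw [if_pos h, h]; constructor <;> [linarith; linarith [hAB]]
    · rw [if_neg h]
      rcases eq_or_ne (i:ℕ) (k+1) with h' | h'
      · rw [if_pos h', h']; constructor
        · linarith
        · have : M - B ≤ 3 ^ k := by omega
          calc 3 * (M - B) ≤ 3 * 3 ^ k := by linarith
          _ = 3 ^ (k+1) := by ring
      · rw [if_neg h']; exact ⟨le_refl 0, by positivity⟩
  · show (∑ i : Fin m, ((pg m k M i : ℝ) / 3 ^ (i:ℕ))) = 1
    have := key (fun j => 1 / 3 ^ j)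
    simp only [mul_one_div] at this
    rw [this]
    push_cast
    rw [hAr, hBr, pow_succ]
    field_simp
    ring
  · rw [keyZ]; linarith [hAB, hgeo]
  · show (∑ i : Fin m, ((pg m k M i : ℝ) / 3 ^ (i:ℕ) * (C0 + (i:ℕ) * d))) =
      C0 + d * ((k : ℝ) - 1/2 + (2 * (M:ℝ) + 1) / (2 * 3 ^ k))
    have := key (fun j => 1 / 3 ^ j * (C0 + j * d))
    simp only [← mul_assoc, mul_one_div] at this
    rw [this]
    push_cast
    rw [hAr, hBr, pow_succ]
    field_simp
    ring

/-- For `1 ≤ n ≤ N_L`, the net-rate curves for pilot lengths `2n-1` and `2n+1`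
intersect at `N_coh = Δ_n`:
`(1 - (2n-1)/Δ_n)·C*_sum(2n-1) = (1 - (2n+1)/Δ_n)·C*_sum(2n+1)`. -/
theorem net_rate_curves_intersect (m : ℕ) (hm : 2 ≤ m)
    (C0 d : ℝ) (hC0 : 0 < C0) (hd : 0 < d)
    (n : ℕ) (hn : 1 ≤ n) (hn' : 2 * n + 1 ≤ 3 ^ (m - 1))
    (V1 V2 : ℝ)
    (hV1 : IsGreatest {x : ℝ | ∃ p : Fin m → ℤ, validP p ∧ Npil p = 2 * (n : ℤ) - 1 ∧
      Csum C0 d p = x} V1)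
    (hV2 : IsGreatest {x : ℝ | ∃ p : Fin m → ℤ, validP p ∧ Npil p = 2 * (n : ℤ) + 1 ∧
      Csum C0 d p = x} V2) :
    (1 - (2 * (n : ℝ) - 1) / Delta C0 d n) * V1 =
    (1 - (2 * (n : ℝ) + 1) / Delta C0 d n) * V2 := by
  -- Abbreviation: χ := chiN (2n - 1)
  set χ := chiN (2 * (n : ℤ) - 1) with hχdef
  have hdiv : (2 * (n : ℤ) - 1 - 1) / 2 = (n : ℤ) - 1 := by omega
  have hgeoZ : ∀ k : ℕ, 2 * (∑ s ∈ Finset.range k, (3:ℤ) ^ s) = 3 ^ k - 1 := by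
    intro k; have := geom_sum_mul (3:ℤ) k; linarith
  have hn1 : (1 : ℤ) ≤ (n : ℤ) := by exact_mod_cast hn
  -- m - 2 belongs to the defining set of χ
  have hm2mem : m - 2 ∈ {k : ℕ | (2 * (n:ℤ) - 1 - 1) / 2 <
      ∑ i ∈ Finset.range (k + 1), (3 : ℤ) ^ i} := by
    simp only [Set.mem_setOf_eq]
    have hm1 : m - 2 + 1 = m - 1 := by omega
    rw [hm1, hdiv]
    have h2 := hgeoZ (m - 1)
    have h3 : (2 * (n:ℤ) + 1) ≤ 3 ^ (m - 1) := by exact_mod_cast hn'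
    linarith
  have hχ1' : (2 * (n:ℤ) - 1 - 1) / 2 < ∑ i ∈ Finset.range (χ + 1), (3 : ℤ) ^ i :=
    Nat.sInf_mem ⟨m - 2, hm2mem⟩
  have hχ1 : (n : ℤ) - 1 < ∑ i ∈ Finset.range (χ + 1), (3 : ℤ) ^ i := by
    rwa [hdiv] at hχ1'
  have hchi_eq : χ = sInf {k : ℕ | (2 * (n:ℤ) - 1 - 1) / 2 <
      ∑ i ∈ Finset.range (k + 1), (3 : ℤ) ^ i} := rfl
  have hχm : χ + 1 < m := by
    have h := Nat.sInf_le hm2mem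
    rw [← hchi_eq] at h
    omega
  have hχ2 : (∑ i ∈ Finset.range χ, (3 : ℤ) ^ i) ≤ (n : ℤ) - 1 := by
    rcases Nat.eq_zero_or_pos χ with h0 | hpos
    · rw [h0]; simp; linarith
    · obtain ⟨j, hj⟩ : ∃ j, χ = j + 1 := ⟨χ - 1, by omega⟩
      have hnot := Nat.notMem_of_lt_sInf (s := {k : ℕ | (2 * (n:ℤ) - 1 - 1) / 2 <
        ∑ i ∈ Finset.range (k + 1), (3 : ℤ) ^ i}) (m := j) (by rw [← hchi_eq]; omega)
      simp only [Set.mem_setOf_eq, not_lt] at hnot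
      rw [hdiv] at hnot
      rw [hj]
      exact hnot
  have h3χ : (0:ℝ) < (3:ℝ) ^ χ := by positivity
  -- value of V1
  have hV1val : V1 = C0 + d * ((χ : ℝ) - 1/2 + (2 * (n:ℝ) - 1) / (2 * 3 ^ χ)) := by
    apply le_antisymm
    · obtain ⟨p, hpv, hpN, hpC⟩ := hV1.1
      rw [← hpC]
      have h := csum_le C0 d hd p hpv _ hpN χ
      push_cast at h
      convert h using 4
    · obtain ⟨hvalid, hN, hC⟩ := pg_spec m χ hχm ((n:ℤ) - 1) (by linarith) (by linarith) C0 d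
      apply hV1.2
      exact ⟨pg m χ ((n:ℤ) - 1), hvalid, by rw [hN]; ring,
        by rw [hC]; push_cast; ring⟩
  -- value of V2 (same χ works)
  have hn2 : (n : ℤ) ≤ ∑ i ∈ Finset.range (χ + 1), (3 : ℤ) ^ i := by
    have := Int.lt_iff_add_one_le.mp hχ1; linarith
  have hV2val : V2 = C0 + d * ((χ : ℝ) - 1/2 + (2 * (n:ℝ) + 1) / (2 * 3 ^ χ)) := by
    apply le_antisymm
    · obtain ⟨p, hpv, hpN, hpC⟩ := hV2.1
      rw [← hpC]
      have h := csum_le C0 d hd p hpv _ hpN χ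
      push_cast at h
      convert h using 4
    · obtain ⟨hvalid, hN, hC⟩ := pg_spec m χ hχm (n:ℤ) (by linarith) hn2 C0 d
      apply hV2.2
      exact ⟨pg m χ (n:ℤ), hvalid, by rw [hN], by rw [hC]; push_cast; ring⟩
  -- closed form of Delta
  have hDelta : Delta C0 d n = 2 * ((2 * (n:ℝ) - 1) - ((3:ℝ) ^ χ - 1) / 2 +
      3 ^ χ * (C0 + (χ : ℝ) * d) / d) + 1 := by
    unfold Delta
    rw [← hχdef, geom_sum_eq (by norm_num : (3:ℝ) ≠ 1) χ]
    norm_num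
  -- Delta is positive
  have hΔpos : 0 < Delta C0 d n := by
    rw [hDelta]
    have h1 : (0:ℝ) < 3 ^ χ * (C0 + (χ : ℝ) * d) / d := by positivity
    have hz : (3:ℤ) ^ χ - 1 ≤ 2 * ((n:ℤ) - 1) := by
      have := hgeoZ χ; linarith
    have hr : (3:ℝ) ^ χ - 1 ≤ 2 * ((n:ℝ) - 1) := by exact_mod_cast hz
    linarith
  have hne : Delta C0 d n ≠ 0 := hΔpos.ne'
  rw [hV1val, hV2val]
  have expand : ∀ a E : ℝ, (1 - a / Delta C0 d n) * E =
      (Delta C0 d n - a) * E / Delta C0 d n := by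
    intro a E; field_simp
  rw [expand, expand]
  have key : (Delta C0 d n - (2 * (n:ℝ) - 1)) *
        (C0 + d * ((χ : ℝ) - 1/2 + (2 * (n:ℝ) - 1) / (2 * 3 ^ χ))) =
      (Delta C0 d n - (2 * (n:ℝ) + 1)) *
        (C0 + d * ((χ : ℝ) - 1/2 + (2 * (n:ℝ) + 1) / (2 * 3 ^ χ))) := by
    rw [hDelta]
    field_simp
    ring
  rw [key]
end

section
/- The intersection points are strictly increasing: Δ_1 > 0, and Δ_{n+1} > Δ_n for every integer n with 1 ≤ n ≤ N_L − 1. -/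
lemma chi_set_nonempty (N : ℤ) :
    {k : ℕ | (N - 1) / 2 < ∑ i ∈ Finset.range (k + 1), (3 : ℤ) ^ i}.Nonempty := by
  refine ⟨((N - 1) / 2).toNat, ?_⟩
  have h1 : (N - 1) / 2 ≤ (((N - 1) / 2).toNat : ℤ) := Int.self_le_toNat _
  have h2 : ((((N - 1) / 2).toNat : ℤ) + 1) ≤ ∑ i ∈ Finset.range (((N - 1) / 2).toNat + 1), (3 : ℤ) ^ i := by
    calc ((((N - 1) / 2).toNat : ℤ) + 1)
        = ∑ _i ∈ Finset.range (((N - 1) / 2).toNat + 1), (1 : ℤ) := by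
          simp
      _ ≤ _ := Finset.sum_le_sum (fun i _ => one_le_pow₀ (by norm_num))
  simp only [Set.mem_setOf_eq]
  omega

lemma chiN_mono {N N' : ℤ} (h : N ≤ N') : chiN N ≤ chiN N' := by
  have hmem := Nat.sInf_mem (chi_set_nonempty N')
  refine Nat.sInf_le ?_
  simp only [Set.mem_setOf_eq] at hmem ⊢
  calc (N - 1) / 2 ≤ (N' - 1) / 2 := Int.ediv_le_ediv (by norm_num) (by omega)
    _ < _ := hmem

lemma chiN_one : chiN 1 = 0 := by
  rw [chiN, Nat.sInf_eq_zero]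
  left
  norm_num

lemma key_ineq {k k' : ℕ} (hk : k ≤ k') :
    (3:ℝ)^k' - 3^k ≤ 2 * ((3:ℝ)^k' * k' - 3^k * k) := by
  rcases eq_or_lt_of_le hk with rfl | hlt
  · exact le_of_eq (by ring)
  · have hA : (3:ℝ)^k ≤ 3^k' := by
      apply pow_le_pow_right₀ (by norm_num) hk
    have hA1 : (1:ℝ) ≤ 3^k := one_le_pow₀ (by norm_num)
    have hkk : (k:ℝ) + 1 ≤ k' := by exact_mod_cast hlt
    nlinarith [mul_le_mul_of_nonneg_left hkk (le_trans (by norm_num) hA : (0:ℝ) ≤ 3^k'),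
      mul_le_mul_of_nonneg_right hA (Nat.cast_nonneg k : (0:ℝ) ≤ k)]

lemma Delta_eq (C0 d : ℝ) (n : ℕ) :
    Delta C0 d n = 2 * ((2 * (n : ℝ) - 1) - ((3:ℝ) ^ chiN (2 * (n : ℤ) - 1) - 1) / 2 +
      3 ^ chiN (2 * (n : ℤ) - 1) * (C0 + (chiN (2 * (n : ℤ) - 1) : ℝ) * d) / d) + 1 := by
  rw [Delta, geom_sum_eq (by norm_num : (3:ℝ) ≠ 1)]
  norm_num

/-- The intersection points are strictly increasing: `Δ_1 > 0` and
`Δ_{n+1} > Δ_n` for every `1 ≤ n ≤ N_L - 1`. -/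
theorem intersection_points_increasing (m : ℕ) (hm : 2 ≤ m)
    (C0 d : ℝ) (hC0 : 0 < C0) (hd : 0 < d) :
    0 < Delta C0 d 1 ∧
    ∀ n : ℕ, 1 ≤ n → 2 * n + 3 ≤ 3 ^ (m - 1) →
      Delta C0 d n < Delta C0 d (n + 1) := by
  constructor
  · rw [Delta_eq]
    have h1 : chiN (2 * ((1:ℕ) : ℤ) - 1) = 0 := by norm_num [chiN_one]
    rw [h1]
    have : 0 < C0 / d := div_pos hC0 hd
    simp only [pow_zero, Nat.cast_zero, Nat.cast_one]
    rw [zero_mul, add_zero, one_mul]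
    nlinarith
  · intro n hn _
    set k := chiN (2 * (n : ℤ) - 1) with hkdef
    set k' := chiN (2 * ((n : ℤ) + 1) - 1) with hk'def
    have hkk' : k ≤ k' := chiN_mono (by omega)
    rw [Delta_eq, Delta_eq]
    have hcast : (2 * ((n+1 : ℕ) : ℤ) - 1) = 2 * ((n:ℤ)+1) - 1 := by push_cast; ring
    rw [hcast]
    set A := (3:ℝ)^k with hA
    set A' := (3:ℝ)^k' with hA'
    have hAle : A ≤ A' := pow_le_pow_right₀ (by norm_num) hkk'
    have hkey : A' - A ≤ 2 * (A' * k' - A * k) := key_ineq hkk'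
    have hC : A * C0 ≤ A' * C0 := mul_le_mul_of_nonneg_right hAle hC0.le
    have h2 : (A' - A) / 2 * d ≤ A' * (C0 + k' * d) - A * (C0 + k * d) := by nlinarith
    have h3 : (A' - A) / 2 ≤ (A' * (C0 + k' * d) - A * (C0 + k * d)) / d := by
      rw [le_div_iff₀ hd]; linarith
    have hexp : (A' * (C0 + k' * d)) / d - (A * (C0 + k * d)) / d
        = (A' * (C0 + k' * d) - A * (C0 + k * d)) / d := by ring
    push_cast
    nlinarith [h3, hexp]
end
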